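/- arXiv:2408.15360 — 2 statements merged into one kernel-verified Lean document; each statement's English description precedes it below -/
import Mathlib

section
/- Let d be an odd positive integer and α an integer with gcd(α, d) = 1. Then the number of pairs (b₁, b₂) of residues modulo d with b₁² + α·b₂² ≡ 0 (mod d) is O_ε(d^{1+ε}) for every ε > 0. -/
/-!
Take the solutions `(x, y)` in `[0, d)²` and group them by `g = gcd(x, y, d)`. Writing `x = g x'`,
`y = g y'`, `n = d / g` and `m = n / gcd(n, g)`, one gets `m ∣ x'² + α y'²` with `y'` prime to `m`,
so `x' / y'` is a square root of `-α` modulo `m`. As `m` is odd and `-α` is a unit, a square root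
`t` of `s²` gives the idempotent `(s - t) / 2s` of `ZMod m`, and an idempotent `e` is determined by
the divisor `gcd(e, m)`; so there are at most `τ(m) ≤ τ(d)` square roots. Since moreover `y' < n`
and `x' / m < gcd(n, g) ≤ g`, each group has at most `τ(d) d` elements, and there are at most
`d τ(d)²` solutions in all. Finally `τ(d) = O_ε(d^(ε/2))`.
-/

open Finset

lemma add_one_le_mul_pow {r : ℝ} (hr : 1 < r) (k : ℕ) :
    (k : ℝ) + 1 ≤ (1 + (r - 1)⁻¹) * r ^ k := by
  have hbern : 1 + k * (r - 1) ≤ r ^ k := by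
    simpa using one_add_mul_le_pow (a := r - 1) (by linarith) k
  have hinv : 0 < (r - 1)⁻¹ := inv_pos.mpr (by linarith)
  have hmul : (r - 1)⁻¹ * (r - 1) = 1 := inv_mul_cancel₀ (by linarith)
  calc (k : ℝ) + 1 ≤ (1 + (r - 1)⁻¹) * (1 + k * (r - 1)) := by
        nlinarith [(Nat.cast_nonneg k : (0 : ℝ) ≤ k)]
    _ ≤ (1 + (r - 1)⁻¹) * r ^ k := by gcongr

lemma natCast_rpow_eq_prod_primeFactors {n : ℕ} (hn : n ≠ 0) (δ : ℝ) :
    (n : ℝ) ^ δ = ∏ p ∈ n.primeFactors, ((p : ℝ) ^ δ) ^ n.factorization p := by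
  conv_lhs => rw [← Nat.prod_factorization_pow_eq_self hn]
  rw [Nat.prod_factorization_eq_prod_primeFactors, Nat.cast_prod,
    ← Real.finsetProd_rpow _ _ (fun p _ => by positivity)]
  refine prod_congr rfl fun p _ => ?_
  rw [Nat.cast_pow, ← Real.rpow_natCast, ← Real.rpow_mul (by positivity), mul_comm,
    Real.rpow_mul_natCast (by positivity)]

theorem exists_card_divisors_le_mul_rpow {δ : ℝ} (hδ : 0 < δ) :
    ∃ C : ℝ, 0 < C ∧ ∀ n : ℕ, n ≠ 0 → (#n.divisors : ℝ) ≤ C * (n : ℝ) ^ δ := by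
  set r : ℝ := 2 ^ δ
  have hr : 1 < r := Real.one_lt_rpow (by norm_num) hδ
  set M : ℝ := 1 + (r - 1)⁻¹
  have hM : 1 ≤ M := le_add_of_nonneg_right (inv_nonneg.mpr (by linarith))
  set P : ℕ := ⌈(2 : ℝ) ^ δ⁻¹⌉₊
  refine ⟨M ^ P, by positivity, fun n hn => ?_⟩
  -- small primes contribute a factor at most `M`, large ones (with `p ^ δ ≥ 2`) none
  have hfactor : ∀ p ∈ n.primeFactors, ((n.factorization p : ℕ) : ℝ) + 1 ≤
      (if p < P then M else 1) * ((p : ℝ) ^ δ) ^ n.factorization p := by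
    intro p hp
    have hp2 : (2 : ℝ) ≤ p := by exact_mod_cast (Nat.prime_of_mem_primeFactors hp).two_le
    split_ifs with hpP
    · calc _ ≤ M * r ^ n.factorization p := add_one_le_mul_pow hr _
        _ ≤ M * ((p : ℝ) ^ δ) ^ n.factorization p := by
          gcongr; exact Real.rpow_le_rpow (by norm_num) hp2 hδ.le
    · have h2 : (2 : ℝ) ≤ (p : ℝ) ^ δ := by
        have : (2 : ℝ) ^ δ⁻¹ ≤ p := (Nat.ceil_le.mp (not_lt.mp hpP))
        calc (2 : ℝ) = ((2 : ℝ) ^ δ⁻¹) ^ δ := by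
              rw [← Real.rpow_mul (by norm_num), inv_mul_cancel₀ hδ.ne', Real.rpow_one]
          _ ≤ (p : ℝ) ^ δ := by gcongr
      calc _ ≤ (2 : ℝ) ^ n.factorization p := by
            exact_mod_cast Nat.lt_two_pow_self
        _ ≤ _ := by rw [one_mul]; gcongr
  have hsmall : ∏ p ∈ n.primeFactors, (if p < P then M else 1) ≤ M ^ P := by
    rw [prod_ite, prod_const, prod_const_one, mul_one]
    calc M ^ #{p ∈ n.primeFactors | p < P} ≤ M ^ #(range P) := by
          refine pow_le_pow_right₀ hM (card_le_card fun p hp => ?_)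
          simpa using (mem_filter.mp hp).2
      _ = M ^ P := by rw [card_range]
  calc (#n.divisors : ℝ) = ∏ p ∈ n.primeFactors, (((n.factorization p : ℕ) : ℝ) + 1) := by
        rw [Nat.card_divisors hn]; push_cast; rfl
    _ ≤ ∏ p ∈ n.primeFactors, ((if p < P then M else 1) * ((p : ℝ) ^ δ) ^ n.factorization p) :=
        prod_le_prod (fun _ _ => by positivity) hfactor
    _ ≤ M ^ P * (n : ℝ) ^ δ := by
        rw [prod_mul_distrib, ← natCast_rpow_eq_prod_primeFactors hn]
        gcongr

theorem IsIdempotentElem.eq_of_dvd_of_dvd {R : Type*} [CommRing R] {e f : R}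
    (he : IsIdempotentElem e) (hf : IsIdempotentElem f) (hef : e ∣ f) (hfe : f ∣ e) : e = f := by
  obtain ⟨a, ha⟩ := hef
  obtain ⟨b, hb⟩ := hfe
  calc e = f * f * b := by rw [hf.eq, hb]
    _ = e * f := by rw [mul_assoc, ← hb, mul_comm]
    _ = f := by rw [ha, ← mul_assoc, he.eq]

lemma isIdempotentElem_of_sq_eq_sq {R : Type*} [CommRing R] {s t u : R} (hu : u * (2 * s) = 1)
    (h : t ^ 2 = s ^ 2) : IsIdempotentElem ((s - t) * u) := by
  rw [IsIdempotentElem]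
  linear_combination u ^ 2 * h + (s - t) * u * hu

theorem card_sq_eq_le_card_isIdempotentElem {R : Type*} [CommRing R] [Finite R]
    (h2 : IsUnit (2 : R)) {c : R} (hc : IsUnit c) :
    Nat.card {t : R // t ^ 2 = c} ≤ Nat.card {e : R // IsIdempotentElem e} := by
  rcases isEmpty_or_nonempty {t : R // t ^ 2 = c} with hempty | ⟨s, hs⟩
  · simp
  obtain ⟨u, hu⟩ := (h2.mul ((isUnit_pow_iff two_ne_zero).mp (hs ▸ hc))).exists_left_inv
  refine Nat.card_le_card_of_injective
    (fun t => ⟨(s - t) * u, isIdempotentElem_of_sq_eq_sq hu (t.2.trans hs.symm)⟩) fun t t' h => ?_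
  have h' : (s - t) * u = (s - t') * u := congrArg Subtype.val h
  exact Subtype.ext (by linear_combination (-2 * s) * h' - (t.1 - t'.1) * hu)

theorem ZMod.card_isIdempotentElem_le_card_divisors {m : ℕ} [NeZero m] :
    Nat.card {e : ZMod m // IsIdempotentElem e} ≤ #m.divisors := by
  have hdvd : ∀ e : ZMod m, ((e.val.gcd m : ℕ) : ZMod m) ∣ e ∧ e ∣ ((e.val.gcd m : ℕ) : ZMod m) :=
    fun e => ⟨by simpa using Nat.cast_dvd_cast (α := ZMod m) (Nat.gcd_dvd_left e.val m),
      ⟨e⁻¹, (ZMod.mul_inv_eq_gcd e).symm⟩⟩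
  calc Nat.card {e : ZMod m // IsIdempotentElem e} ≤ Nat.card m.divisors := by
        refine Nat.card_le_card_of_injective
          (fun e => ⟨e.1.val.gcd m, Nat.mem_divisors.mpr ⟨Nat.gcd_dvd_right _ _, NeZero.ne m⟩⟩)
          fun e f hef => ?_
        have hg : e.1.val.gcd m = f.1.val.gcd m := congrArg Subtype.val hef
        exact Subtype.ext (e.2.eq_of_dvd_of_dvd f.2 ((hdvd e.1).2.trans (hg ▸ (hdvd f.1).1))
          ((hdvd f.1).2.trans (hg ▸ (hdvd e.1).1)))
    _ = #m.divisors := Nat.card_eq_finsetCard _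

theorem ZMod.card_sq_eq_le_card_divisors {m : ℕ} [NeZero m] (hm : Odd m) {c : ZMod m}
    (hc : IsUnit c) : #{t : ZMod m | t ^ 2 = c} ≤ #m.divisors := by
  have h2 : IsUnit (2 : ZMod m) := by
    exact_mod_cast (ZMod.isUnit_iff_coprime 2 m).mpr (Nat.coprime_two_left.mpr hm)
  rw [← Fintype.card_subtype, ← Nat.card_eq_fintype_card]
  exact (card_sq_eq_le_card_isIdempotentElem h2 hc).trans
    ZMod.card_isIdempotentElem_le_card_divisors

theorem card_primitive_solutions_le {m n : ℕ} [NeZero m] (hmn : m ∣ n) (α : ℤ) :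
    #{p ∈ range n ×ˢ range n | (m : ℤ) ∣ p.1 ^ 2 + α * p.2 ^ 2 ∧ p.2.Coprime m} ≤
      #{t : ZMod m | t ^ 2 = -α} * n * (n / m) := by
  -- `x` is recovered from `x / y mod m`, `y` and `x / m`
  calc _ ≤ #(({t : ZMod m | t ^ 2 = -α} : Finset _) ×ˢ range n ×ˢ range (n / m)) := by
        refine card_le_card_of_injOn
          (fun p => ((p.1 : ZMod m) * (p.2 : ZMod m)⁻¹, p.2, p.1 / m)) (fun p hp => ?_) ?_
        · simp only [coe_filter, mem_product, mem_range] at hp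
          obtain ⟨⟨hx, hy⟩, hdvd, hcop⟩ := hp
          have hQ : ((p.1 : ZMod m)) ^ 2 + α * (p.2 : ZMod m) ^ 2 = 0 := by
            exact_mod_cast (ZMod.intCast_zmod_eq_zero_iff_dvd _ m).mpr hdvd
          have hunit : (p.2 : ZMod m) * (p.2 : ZMod m)⁻¹ = 1 :=
            ZMod.mul_inv_of_unit _ ((ZMod.isUnit_iff_coprime _ _).mpr hcop)
          simp only [coe_product, coe_filter, coe_range, Set.mem_prod, mem_univ, true_and,
            Set.mem_Iio, Set.mem_ofPred_eq]
          refine ⟨?_, hy, Nat.div_lt_div_of_lt_of_dvd hmn hx⟩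
          linear_combination (p.2 : ZMod m)⁻¹ ^ 2 * hQ -
            α * ((p.2 : ZMod m) * (p.2 : ZMod m)⁻¹ + 1) * hunit
        · rintro ⟨x, y⟩ hp ⟨x', y'⟩ hp' h
          simp only [coe_filter, mem_product, mem_range] at hp hp'
          simp only [Prod.mk.injEq] at h
          obtain ⟨hratio, rfl, hdiv⟩ := h
          have hmod : (x : ZMod m) = x' := by
            have hunit := ZMod.mul_inv_of_unit _ ((ZMod.isUnit_iff_coprime _ _).mpr hp.2.2)
            linear_combination (y : ZMod m) * hratio + ((x' : ZMod m) - x) * hunit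
          rw [ZMod.natCast_eq_natCast_iff'] at hmod
          rw [Prod.mk.injEq, ← Nat.div_add_mod x m, ← Nat.div_add_mod x' m, hdiv, hmod]
          exact ⟨rfl, rfl⟩
    _ = #{t : ZMod m | t ^ 2 = -α} * n * (n / m) := by
        rw [card_product, card_product, card_range, card_range, mul_assoc]

theorem div_gcd_dvd_of_mul_dvd_sq_mul {g n : ℕ} {Q : ℤ} (hg : 0 < g) (hn : 0 < n)
    (h : ((g * n : ℕ) : ℤ) ∣ (g : ℤ) ^ 2 * Q) : ((n / n.gcd g : ℕ) : ℤ) ∣ Q := by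
  have hnQ : (n : ℤ) ∣ g * Q := by
    refine (mul_dvd_mul_iff_left (by positivity : (g : ℤ) ≠ 0)).mp ?_
    simpa [sq, mul_assoc] using h
  have := Int.ModEq.cancel_left_div_gcd (m := n) (c := g) (a := Q) (b := 0) (by positivity)
    (by simpa using (Int.modEq_zero_iff_dvd.mpr hnQ))
  rw [Int.modEq_zero_iff_dvd, Int.gcd_natCast_natCast] at this
  exact_mod_cast this

theorem coprime_of_dvd_sq_add_mul_sq {m n x y : ℕ} {α : ℤ} (hmn : m ∣ n)
    (hdvd : (m : ℤ) ∣ (x : ℤ) ^ 2 + α * (y : ℤ) ^ 2) (hprim : (x.gcd y).gcd n = 1) :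
    y.Coprime m := by
  set h := y.gcd m
  have hx : h ∣ x ^ 2 := by
    have hy : (h : ℤ) ∣ α * (y : ℤ) ^ 2 :=
      ((Int.natCast_dvd_natCast.mpr (Nat.gcd_dvd_left y m)).pow two_ne_zero).mul_left α
    exact_mod_cast (dvd_add_left hy).mp
      ((Int.natCast_dvd_natCast.mpr (Nat.gcd_dvd_right y m)).trans hdvd)
  have hhx : h.Coprime x := Nat.eq_one_of_dvd_one <| hprim ▸
    Nat.dvd_gcd (Nat.dvd_gcd (Nat.gcd_dvd_right h x) ((Nat.gcd_dvd_left h x).trans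
      (Nat.gcd_dvd_left y m))) ((Nat.gcd_dvd_left h x).trans ((Nat.gcd_dvd_right y m).trans hmn))
  exact (hhx.pow_right 2).eq_one_of_dvd hx

theorem dvd_sq_add_mul_sq_and_coprime_of_gcd_eq {g n x y : ℕ} {α : ℤ} (hg : 0 < g) (hn : 0 < n)
    (hdvd : ((g * n : ℕ) : ℤ) ∣ ((g * x : ℕ) : ℤ) ^ 2 + α * ((g * y : ℕ) : ℤ) ^ 2)
    (hgcd : ((g * x).gcd (g * y)).gcd (g * n) = g) :
    ((n / n.gcd g : ℕ) : ℤ) ∣ (x : ℤ) ^ 2 + α * (y : ℤ) ^ 2 ∧ y.Coprime (n / n.gcd g) := by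
  have hprim : (x.gcd y).gcd n = 1 := by
    rw [Nat.gcd_mul_left, Nat.gcd_mul_left] at hgcd
    exact Nat.eq_of_mul_eq_mul_left hg (hgcd.trans (mul_one g).symm)
  have hm : ((n / n.gcd g : ℕ) : ℤ) ∣ (x : ℤ) ^ 2 + α * (y : ℤ) ^ 2 :=
    div_gcd_dvd_of_mul_dvd_sq_mul hg hn (by convert hdvd using 1; push_cast; ring)
  exact ⟨hm, coprime_of_dvd_sq_add_mul_sq (Nat.div_dvd_of_dvd (Nat.gcd_dvd_left n g)) hm hprim⟩

theorem card_solutions_gcd_eq_le_card_primitive {d g : ℕ} {α : ℤ} (hd : 0 < d) (hg : g ∣ d) :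
    #{p ∈ range d ×ˢ range d | (d : ℤ) ∣ p.1 ^ 2 + α * p.2 ^ 2 ∧ (p.1.gcd p.2).gcd d = g} ≤
      #{p ∈ range (d / g) ×ˢ range (d / g) |
        ((d / g / (d / g).gcd g : ℕ) : ℤ) ∣ p.1 ^ 2 + α * p.2 ^ 2 ∧
          p.2.Coprime (d / g / (d / g).gcd g)} := by
  have hg0 : 0 < g := Nat.pos_of_dvd_of_pos hg hd
  have hgn : g * (d / g) = d := Nat.mul_div_cancel' hg
  have hgdvd : ∀ p : ℕ × ℕ, (p.1.gcd p.2).gcd d = g → g ∣ p.1 ∧ g ∣ p.2 := fun p hp =>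
    ⟨hp ▸ (Nat.gcd_dvd_left _ _).trans (Nat.gcd_dvd_left _ _),
      hp ▸ (Nat.gcd_dvd_left _ _).trans (Nat.gcd_dvd_right _ _)⟩
  refine card_le_card_of_injOn (fun p => (p.1 / g, p.2 / g)) ?_ ?_
  · rintro ⟨X, Y⟩ hp
    simp only [coe_filter, mem_product, mem_range] at hp ⊢
    obtain ⟨⟨hX, hY⟩, hdvd, hgcd⟩ := hp
    obtain ⟨⟨x, rfl⟩, ⟨y, rfl⟩⟩ := hgdvd _ hgcd
    rw [Nat.mul_div_cancel_left x hg0, Nat.mul_div_cancel_left y hg0]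
    rw [← hgn] at hX hY hdvd hgcd
    exact ⟨⟨Nat.lt_of_mul_lt_mul_left hX, Nat.lt_of_mul_lt_mul_left hY⟩,
      dvd_sq_add_mul_sq_and_coprime_of_gcd_eq hg0 (Nat.div_pos (Nat.le_of_dvd hd hg) hg0) hdvd hgcd⟩
  · intro p hp p' hp' h
    simp only [coe_filter, mem_product, mem_range, Prod.mk.injEq] at hp hp' h
    obtain ⟨hg1, hg2⟩ := hgdvd p hp.2.2
    obtain ⟨hg1', hg2'⟩ := hgdvd p' hp'.2.2
    exact Prod.ext ((Nat.div_left_inj hg1 hg1').mp h.1) ((Nat.div_left_inj hg2 hg2').mp h.2)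

theorem card_solutions_gcd_eq_le {d g : ℕ} {α : ℤ} (hd : Odd d) (hα : Int.gcd α d = 1)
    (hg : g ∣ d) :
    #{p ∈ range d ×ˢ range d | (d : ℤ) ∣ p.1 ^ 2 + α * p.2 ^ 2 ∧ (p.1.gcd p.2).gcd d = g} ≤
      #d.divisors * d := by
  have hd0 : 0 < d := hd.pos
  have hg0 : 0 < g := Nat.pos_of_dvd_of_pos hg hd0
  set n := d / g
  have hgn : g * n = d := Nat.mul_div_cancel' hg
  have hn0 : 0 < n := Nat.div_pos (Nat.le_of_dvd hd0 hg) hg0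
  set m := n / n.gcd g
  have hmn : m ∣ n := Nat.div_dvd_of_dvd (Nat.gcd_dvd_left n g)
  have hmd : m ∣ d := hmn.trans (Dvd.intro_left g hgn)
  have : NeZero m := ⟨(Nat.div_pos (Nat.gcd_le_left g hn0) (Nat.gcd_pos_of_pos_left g hn0)).ne'⟩
  have hsqrt : #{t : ZMod m | t ^ 2 = -α} ≤ #d.divisors := by
    refine (ZMod.card_sq_eq_le_card_divisors (hd.of_dvd_nat hmd) ?_).trans
      (card_le_card (Nat.divisors_subset_of_dvd hd0.ne' hmd))
    rw [← Int.cast_neg, ZMod.coe_int_isUnit_iff_isCoprime, IsCoprime.neg_right_iff]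
    exact (Int.isCoprime_iff_gcd_eq_one.mpr hα).symm.of_isCoprime_of_dvd_left
      (Int.natCast_dvd_natCast.mpr hmd)
  calc _ ≤ #{p ∈ range n ×ˢ range n | (m : ℤ) ∣ p.1 ^ 2 + α * p.2 ^ 2 ∧ p.2.Coprime m} :=
        card_solutions_gcd_eq_le_card_primitive hd0 hg
    _ ≤ #{t : ZMod m | t ^ 2 = -α} * n * (n / m) := card_primitive_solutions_le hmn α
    _ ≤ #d.divisors * (n * g) := by
        rw [mul_assoc, Nat.div_div_self (Nat.gcd_dvd_left n g) hn0.ne']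
        gcongr
        exact Nat.gcd_le_right (m := n) hg0
    _ = #d.divisors * d := by rw [mul_comm n, hgn]

theorem card_solutions_le {d : ℕ} {α : ℤ} (hd : Odd d) (hα : Int.gcd α d = 1) :
    #{p ∈ range d ×ˢ range d | (d : ℤ) ∣ p.1 ^ 2 + α * p.2 ^ 2} ≤ d * #d.divisors ^ 2 := by
  rw [card_eq_sum_card_fiberwise (f := fun p => (p.1.gcd p.2).gcd d) (t := d.divisors)
    fun p _ => Nat.mem_divisors.mpr ⟨Nat.gcd_dvd_right _ _, hd.pos.ne'⟩]
  calc _ ≤ #d.divisors • (#d.divisors * d) := by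
        refine sum_le_card_nsmul _ _ _ fun g hg => ?_
        rw [filter_filter]
        exact card_solutions_gcd_eq_le hd hα (Nat.dvd_of_mem_divisors hg)
    _ = d * #d.divisors ^ 2 := by rw [smul_eq_mul]; ring

theorem ZMod.card_sq_add_mul_sq_eq_zero_le (d : ℕ) [NeZero d] (α : ℤ) :
    Nat.card {b : ZMod d × ZMod d // b.1 ^ 2 + (α : ZMod d) * b.2 ^ 2 = 0} ≤
      #{p ∈ range d ×ˢ range d | (d : ℤ) ∣ p.1 ^ 2 + α * p.2 ^ 2} := by
  rw [Nat.card_eq_fintype_card, Fintype.card_subtype]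
  refine card_le_card_of_injOn (fun b => (b.1.val, b.2.val)) (fun b hb => ?_) fun b _ b' _ h => ?_
  · simp only [coe_filter, mem_univ, true_and, mem_product, mem_range] at hb ⊢
    refine ⟨⟨ZMod.val_lt _, ZMod.val_lt _⟩, (ZMod.intCast_zmod_eq_zero_iff_dvd _ d).mp ?_⟩
    push_cast [ZMod.natCast_val, ZMod.cast_id]
    exact hb
  · simp only [Prod.mk.injEq] at h
    exact Prod.ext (ZMod.val_injective d h.1) (ZMod.val_injective d h.2)

theorem stmt_11 :
    ∀ ε : ℝ, 0 < ε → ∃ C : ℝ, 0 < C ∧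
      ∀ (d : ℕ) (α : ℤ), 0 < d → Odd d → Int.gcd α d = 1 →
        (Nat.card {b : ZMod d × ZMod d //
            b.1 ^ 2 + (α : ZMod d) * b.2 ^ 2 = 0} : ℝ)
          ≤ C * (d : ℝ) ^ ((1 : ℝ) + ε) := by
  intro ε hε
  obtain ⟨C, hC, hτ⟩ := exists_card_divisors_le_mul_rpow (half_pos hε)
  refine ⟨C ^ 2, by positivity, fun d α hd hodd hα => ?_⟩
  have : NeZero d := ⟨hd.ne'⟩
  have hcount : (Nat.card {b : ZMod d × ZMod d // b.1 ^ 2 + (α : ZMod d) * b.2 ^ 2 = 0} : ℝ) ≤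
      d * (#d.divisors : ℝ) ^ 2 := by
    exact_mod_cast (ZMod.card_sq_add_mul_sq_eq_zero_le d α).trans (card_solutions_le hodd hα)
  calc _ ≤ d * (#d.divisors : ℝ) ^ 2 := hcount
    _ ≤ d * (C * (d : ℝ) ^ (ε / 2)) ^ 2 := by gcongr; exact hτ d hd.ne'
    _ = C ^ 2 * (d : ℝ) ^ ((1 : ℝ) + ε) := by
        rw [mul_pow, ← Real.rpow_natCast ((d : ℝ) ^ (ε / 2)), ← Real.rpow_mul (by positivity),
          Real.rpow_add (by positivity), Real.rpow_one]
        norm_num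
        ring
end

section
/- Let q, r be positive integers with gcd conditions: suppose α₁, α₂, α₃ are integers coprime to q, and write rα_i/q = a_i + β_i with a_i ∈ ℤ and |β_i| = ||rα_i/q|| ≤ 1/2 for i = 1, 2, 3. If (x₁, x₂, x₃) ∈ ℤ³ satisfies α₁x₁² + α₂x₂² + α₃x₃² ≡ 0 (mod q), then β₁qx₁² + β₂qx₂² + β₃qx₃² ≡ 0 (mod q) where each β_i q is an integer. Moreover, if additionally max{|x₁|,|x₂|,|x₃|} ≤ N, max{|β₁|,|β₂|,|β₃|} < 1/(3N²), and β₁, β₂, β₃ all have the same sign with β_i ≠ 0, then x₁ = x₂ = x₃ = 0. -/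
/-!
Since `r αᵢ - aᵢ q = βᵢ q`, the integer `S = ∑ (r αᵢ - aᵢ q) xᵢ²` equals
`r ∑ αᵢ xᵢ² - q ∑ aᵢ xᵢ²`, hence is divisible by `q`, and also equals `q ∑ βᵢ xᵢ²`.
The smallness of the `βᵢ` relative to `N²` gives `|∑ βᵢ xᵢ²| < 1`, so `|S| < q` forces `S = 0`.
A vanishing sum `∑ βᵢ xᵢ²` with all `βᵢ` of one strict sign has every `xᵢ = 0`.
-/

open Finset

section
variable {ι : Type*} (s : Finset ι)

theorem dvd_sum_sub_mul_of_dvd_sum_mul {R : Type*} [CommRing R] {q : R} (r : R)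
    {α y : ι → R} (a : ι → R) (h : q ∣ ∑ i ∈ s, α i * y i) :
    q ∣ ∑ i ∈ s, (r * α i - a i * q) * y i := by
  have hsplit : ∑ i ∈ s, (r * α i - a i * q) * y i
      = r * ∑ i ∈ s, α i * y i - (∑ i ∈ s, a i * y i) * q := by
    simp only [mul_sum, sum_mul, ← sum_sub_distrib]
    exact sum_congr rfl fun i _ => by ring
  rw [hsplit]
  exact dvd_sub (h.mul_left r) (dvd_mul_left q _)

theorem abs_mul_sq_lt_of_abs_le {β x ε : ℝ} {N : ℕ} (hx : |x| ≤ N) (hβ : |β| < ε / N ^ 2) :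
    |β * x ^ 2| < ε := by
  rcases N.eq_zero_or_pos with rfl | hN
  · rw [Nat.cast_zero, zero_pow two_ne_zero, div_zero] at hβ
    exact absurd hβ (abs_nonneg β).not_gt
  · have hx2 : x ^ 2 ≤ (N : ℝ) ^ 2 := sq_le_sq' (abs_le.1 hx).1 (abs_le.1 hx).2
    calc |β * x ^ 2| = |β| * x ^ 2 := by rw [abs_mul, abs_sq]
      _ ≤ |β| * N ^ 2 := mul_le_mul_of_nonneg_left hx2 (abs_nonneg β)
      _ < ε / N ^ 2 * N ^ 2 := by gcongr
      _ = ε := div_mul_cancel₀ ε (by positivity)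

theorem abs_sum_mul_sq_lt_one {β x : ι → ℝ} {N : ℕ} (hx : ∀ i ∈ s, |x i| ≤ N)
    (hβ : ∀ i ∈ s, |β i| < 1 / (#s * N ^ 2)) : |∑ i ∈ s, β i * x i ^ 2| < 1 := by
  rcases s.eq_empty_or_nonempty with rfl | hs
  · simp
  calc |∑ i ∈ s, β i * x i ^ 2| ≤ ∑ i ∈ s, |β i * x i ^ 2| := abs_sum_le_sum_abs _ _
    _ < ∑ _i ∈ s, (1 / #s : ℝ) :=
        sum_lt_sum_of_nonempty hs fun i hi =>
          abs_mul_sq_lt_of_abs_le (hx i hi) (by rw [div_div]; exact hβ i hi)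
    _ = 1 := by rw [sum_const, nsmul_eq_mul]; field_simp [hs.card_pos.ne']

theorem eq_zero_of_sum_mul_sq_eq_zero_of_pos {β x : ι → ℝ} (hβ : ∀ i ∈ s, 0 < β i)
    (h : ∑ i ∈ s, β i * x i ^ 2 = 0) : ∀ i ∈ s, x i = 0 := by
  intro i hi
  have hterm : β i * x i ^ 2 = 0 :=
    (sum_eq_zero_iff_of_nonneg fun j hj => mul_nonneg (hβ j hj).le (sq_nonneg (x j))).1 h i hi
  exact pow_eq_zero_iff two_ne_zero |>.1 <| (mul_eq_zero.1 hterm).resolve_left (hβ i hi).ne'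

theorem eq_zero_of_sum_mul_sq_eq_zero {β x : ι → ℝ}
    (hβ : (∀ i ∈ s, 0 < β i) ∨ ∀ i ∈ s, β i < 0)
    (h : ∑ i ∈ s, β i * x i ^ 2 = 0) : ∀ i ∈ s, x i = 0 := by
  rcases hβ with hpos | hneg
  · exact eq_zero_of_sum_mul_sq_eq_zero_of_pos s hpos h
  · refine eq_zero_of_sum_mul_sq_eq_zero_of_pos s (β := -β) (fun i hi => neg_pos.2 (hneg i hi)) ?_
    simp [neg_mul, sum_neg_distrib, h]

theorem eq_zero_of_dvd_sum_mul_sq {q : ℕ} (hq : 0 < q) (r : ℤ) {α a x : ι → ℤ} {β : ι → ℝ}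
    (hβ : ∀ i ∈ s, (r * α i : ℝ) / q = a i + β i) (hcong : (q : ℤ) ∣ ∑ i ∈ s, α i * x i ^ 2)
    {N : ℕ} (hx : ∀ i ∈ s, |x i| ≤ N) (hsmall : ∀ i ∈ s, |β i| < 1 / (#s * N ^ 2))
    (hsign : (∀ i ∈ s, 0 < β i) ∨ ∀ i ∈ s, β i < 0) : ∀ i ∈ s, x i = 0 := by
  set S := ∑ i ∈ s, (r * α i - a i * q) * x i ^ 2
  set T := ∑ i ∈ s, β i * (x i : ℝ) ^ 2
  have hSdvd : (q : ℤ) ∣ S := dvd_sum_sub_mul_of_dvd_sum_mul s r a hcong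
  have hST : (S : ℝ) = q * T := by
    push_cast [S, T, mul_sum]
    refine sum_congr rfl fun i hi => ?_
    have hqα : (r * α i : ℝ) = (a i + β i) * q := (div_eq_iff (by positivity)).1 (hβ i hi)
    linear_combination (x i : ℝ) ^ 2 * hqα
  have hT : |T| < 1 := abs_sum_mul_sq_lt_one s (fun i hi => by exact_mod_cast hx i hi) hsmall
  have hS : S = 0 := by
    refine Int.eq_zero_of_abs_lt_dvd hSdvd ?_
    have : |(S : ℝ)| < q := by
      rw [hST, abs_mul, Nat.abs_cast]
      exact mul_lt_of_lt_one_right (by positivity) hT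
    exact_mod_cast this
  have hT0 : T = 0 := by
    have : (q : ℝ) * T = 0 := by rw [← hST, hS, Int.cast_zero]
    exact (mul_eq_zero.1 this).resolve_left (by positivity)
  exact fun i hi => by exact_mod_cast eq_zero_of_sum_mul_sq_eq_zero s hsign hT0 i hi

end

theorem stmt_17_general (q r N : ℕ) (hq : 0 < q)
    (α₁ α₂ α₃ : ℤ)
    (a₁ a₂ a₃ : ℤ) (β₁ β₂ β₃ : ℝ)
    (hβ₁ : ((r : ℝ) * α₁) / q = a₁ + β₁) (hβ₂ : ((r : ℝ) * α₂) / q = a₂ + β₂)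
    (hβ₃ : ((r : ℝ) * α₃) / q = a₃ + β₃)
    (x₁ x₂ x₃ : ℤ)
    (hcong : (q : ℤ) ∣ α₁ * x₁ ^ 2 + α₂ * x₂ ^ 2 + α₃ * x₃ ^ 2) :
    ((q : ℤ) ∣ ((r : ℤ) * α₁ - a₁ * q) * x₁ ^ 2 + ((r : ℤ) * α₂ - a₂ * q) * x₂ ^ 2
        + ((r : ℤ) * α₃ - a₃ * q) * x₃ ^ 2) ∧
    (|x₁| ≤ (N : ℤ) → |x₂| ≤ (N : ℤ) → |x₃| ≤ (N : ℤ) →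
      max (|β₁|) (max (|β₂|) (|β₃|)) < 1 / (3 * (N : ℝ) ^ 2) →
      β₁ ≠ 0 → β₂ ≠ 0 → β₃ ≠ 0 →
      ((0 < β₁ ∧ 0 < β₂ ∧ 0 < β₃) ∨ (β₁ < 0 ∧ β₂ < 0 ∧ β₃ < 0)) →
      x₁ = 0 ∧ x₂ = 0 ∧ x₃ = 0) := by
  have hcong' : (q : ℤ) ∣ ∑ i, ![α₁, α₂, α₃] i * ![x₁, x₂, x₃] i ^ 2 := by
    simpa [Fin.sum_univ_three] using hcong
  refine ⟨by simpa [Fin.sum_univ_three, add_assoc] using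
    dvd_sum_sub_mul_of_dvd_sum_mul univ (r : ℤ) ![a₁, a₂, a₃] hcong', ?_⟩
  intro h₁ h₂ h₃ hsmall _ _ _ hsign
  have hzero := eq_zero_of_dvd_sum_mul_sq univ hq r (β := ![β₁, β₂, β₃]) (a := ![a₁, a₂, a₃])
    (by simp [Fin.forall_fin_succ, hβ₁, hβ₂, hβ₃]) hcong' (N := N)
    (by simp [Fin.forall_fin_succ, h₁, h₂, h₃])
    (by simpa [Fin.forall_fin_succ] using hsmall)
    (by simpa [Fin.forall_fin_succ] using hsign)
  exact ⟨hzero 0 (mem_univ _), hzero 1 (mem_univ _), hzero 2 (mem_univ _)⟩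

theorem stmt_17 (q r N : ℕ) (hq : 0 < q) (hr : 0 < r) (hN : 0 < N)
    (α₁ α₂ α₃ : ℤ) (hα₁ : Int.gcd α₁ q = 1) (hα₂ : Int.gcd α₂ q = 1)
    (hα₃ : Int.gcd α₃ q = 1)
    (a₁ a₂ a₃ : ℤ) (β₁ β₂ β₃ : ℝ)
    (hβ₁ : ((r : ℝ) * α₁) / q = a₁ + β₁) (hβ₂ : ((r : ℝ) * α₂) / q = a₂ + β₂)
    (hβ₃ : ((r : ℝ) * α₃) / q = a₃ + β₃)
    (hb₁ : |β₁| ≤ 1 / 2) (hb₂ : |β₂| ≤ 1 / 2) (hb₃ : |β₃| ≤ 1 / 2)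
    (x₁ x₂ x₃ : ℤ)
    (hcong : (q : ℤ) ∣ α₁ * x₁ ^ 2 + α₂ * x₂ ^ 2 + α₃ * x₃ ^ 2) :
    ((q : ℤ) ∣ ((r : ℤ) * α₁ - a₁ * q) * x₁ ^ 2 + ((r : ℤ) * α₂ - a₂ * q) * x₂ ^ 2
        + ((r : ℤ) * α₃ - a₃ * q) * x₃ ^ 2) ∧
    (|x₁| ≤ (N : ℤ) → |x₂| ≤ (N : ℤ) → |x₃| ≤ (N : ℤ) →
      max (|β₁|) (max (|β₂|) (|β₃|)) < 1 / (3 * (N : ℝ) ^ 2) →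
      β₁ ≠ 0 → β₂ ≠ 0 → β₃ ≠ 0 →
      ((0 < β₁ ∧ 0 < β₂ ∧ 0 < β₃) ∨ (β₁ < 0 ∧ β₂ < 0 ∧ β₃ < 0)) →
      x₁ = 0 ∧ x₂ = 0 ∧ x₃ = 0) :=
  stmt_17_general q r N hq α₁ α₂ α₃ a₁ a₂ a₃ β₁ β₂ β₃ hβ₁ hβ₂ hβ₃ x₁ x₂ x₃ hcong
end
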